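/- arXiv:1112.5995 — 3 statements merged into one kernel-verified Lean document; each statement's English description precedes it below -/
import Mathlib

section
/- With Ψ := Δ_1 δ_2/q_1 + Δ_2 δ_1/q_2, if Ψ = 1 then the point P_{B_1} = (q_2(q_1 - Δ_1 δ_2)²/(Δ_2 q_1), Δ_1 δ_2² q_2 / q_1) equals the point P_{B_2} = (Δ_2 δ_1² q_1 / q_2, q_1(q_2 - Δ_2 δ_1)²/(Δ_1 q_2)), and both equal P_{B_3} = (δ_1(q_1 - Δ_1 δ_2), δ_2(q_2 - Δ_2 δ_1)). -/
/-! Clearing denominators, `Ψ = 1` reads `q₂ (q₁ - Δ₁δ₂) = Δ₂δ₁q₁`, and symmetrically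
`q₁ (q₂ - Δ₂δ₁) = Δ₁δ₂q₂`. Substituting these into the coordinates of `P_{B₁}` and `P_{B₂}`
cancels them down to those of `P_{B₃}`; the coordinates of `P_{B₂}` are those of `P_{B₁}` with
the indices 1 and 2 exchanged, which leaves `Ψ` unchanged. -/

namespace TwoNodeCorner

variable {q1 q2 D1 D2 d1 d2 : ℝ}

theorem mul_sub_eq_of_psi_eq_one (hq1 : q1 ≠ 0) (hq2 : q2 ≠ 0)
    (hPsi : D1 * d2 / q1 + D2 * d1 / q2 = 1) :
    q2 * (q1 - D1 * d2) = D2 * d1 * q1 := by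
  field_simp at hPsi
  linarith

theorem pB1_fst_eq_pB3_fst (hq1 : q1 ≠ 0) (hq2 : q2 ≠ 0) (hD2 : D2 ≠ 0)
    (hPsi : D1 * d2 / q1 + D2 * d1 / q2 = 1) :
    q2 * (q1 - D1 * d2) ^ 2 / (D2 * q1) = d1 * (q1 - D1 * d2) := by
  rw [div_eq_iff (mul_ne_zero hD2 hq1)]
  linear_combination (q1 - D1 * d2) * mul_sub_eq_of_psi_eq_one hq1 hq2 hPsi

theorem pB1_snd_eq_pB3_snd (hq1 : q1 ≠ 0) (hq2 : q2 ≠ 0)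
    (hPsi : D1 * d2 / q1 + D2 * d1 / q2 = 1) :
    D1 * d2 ^ 2 * q2 / q1 = d2 * (q2 - D2 * d1) := by
  rw [add_comm] at hPsi
  rw [div_eq_iff hq1]
  linear_combination -d2 * mul_sub_eq_of_psi_eq_one hq2 hq1 hPsi

end TwoNodeCorner

theorem stmt_5_general (q1 q2 D1 D2 d1 d2 : ℝ) (hq1 : 0 < q1) (hq2 : 0 < q2)
    (hD1 : 0 < D1) (hD2 : 0 < D2)
    (hPsi : D1 * d2 / q1 + D2 * d1 / q2 = 1) :
    ((q2 * (q1 - D1 * d2) ^ 2 / (D2 * q1), D1 * d2 ^ 2 * q2 / q1)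
        = (D2 * d1 ^ 2 * q1 / q2, q1 * (q2 - D2 * d1) ^ 2 / (D1 * q2))) ∧
      ((q2 * (q1 - D1 * d2) ^ 2 / (D2 * q1), D1 * d2 ^ 2 * q2 / q1)
        = (d1 * (q1 - D1 * d2), d2 * (q2 - D2 * d1))) := by
  have hPsi' : D2 * d1 / q2 + D1 * d2 / q1 = 1 := by rwa [add_comm]
  have hB1 : ((q2 * (q1 - D1 * d2) ^ 2 / (D2 * q1), D1 * d2 ^ 2 * q2 / q1)
      = (d1 * (q1 - D1 * d2), d2 * (q2 - D2 * d1))) := by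
    rw [TwoNodeCorner.pB1_fst_eq_pB3_fst hq1.ne' hq2.ne' hD2.ne' hPsi,
      TwoNodeCorner.pB1_snd_eq_pB3_snd hq1.ne' hq2.ne' hPsi]
  have hB2 : ((D2 * d1 ^ 2 * q1 / q2, q1 * (q2 - D2 * d1) ^ 2 / (D1 * q2))
      = (d1 * (q1 - D1 * d2), d2 * (q2 - D2 * d1))) := by
    rw [TwoNodeCorner.pB1_fst_eq_pB3_fst hq2.ne' hq1.ne' hD1.ne' hPsi',
      TwoNodeCorner.pB1_snd_eq_pB3_snd hq2.ne' hq1.ne' hPsi']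
  exact ⟨hB1.trans hB2.symm, hB1⟩

/-- If `Ψ = Δ₁δ₂/q₁ + Δ₂δ₁/q₂ = 1`, the corner points `P_{B₁}`, `P_{B₂}` and
`P_{B₃}` all coincide. -/
theorem stmt_5 (q1 q2 D1 D2 d1 d2 : ℝ) (hq1 : 0 < q1) (hq2 : 0 < q2)
    (hD1 : 0 < D1) (hD2 : 0 < D2) (hD1' : D1 < q1) (hD2' : D2 < q2)
    (hd1 : 0 < d1) (hd1' : d1 ≤ 1) (hd2 : 0 < d2) (hd2' : d2 ≤ 1)
    (hPsi : D1 * d2 / q1 + D2 * d1 / q2 = 1) :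
    ((q2 * (q1 - D1 * d2) ^ 2 / (D2 * q1), D1 * d2 ^ 2 * q2 / q1)
        = (D2 * d1 ^ 2 * q1 / q2, q1 * (q2 - D2 * d1) ^ 2 / (D1 * q2))) ∧
      ((q2 * (q1 - D1 * d2) ^ 2 / (D2 * q1), D1 * d2 ^ 2 * q2 / q1)
        = (d1 * (q1 - D1 * d2), d2 * (q2 - D2 * d1))) :=
  stmt_5_general q1 q2 D1 D2 d1 d2 hq1 hq2 hD1 hD2 hPsi
end

section
/- If Ψ := Δ_1 δ_2/q_1 + Δ_2 δ_1/q_2 > 1, then the slope of the line segment from P_A = (0, δ_2 q_2) to P_{B_1} = (q_2(q_1 - Δ_1 δ_2)²/(Δ_2 q_1), Δ_1 δ_2² q_2/q_1) is strictly steeper (more negative) than the slope of the line segment from P_{B_2} = (Δ_2 δ_1² q_1/q_2, q_1(q_2 - Δ_2 δ_1)²/(Δ_1 q_2)) to P_C = (δ_1 q_1, 0), implying the stability region bounded by these segments and the connecting curve is non-convex. -/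
/-- If `Ψ = Δ₁δ₂/q₁ + Δ₂δ₁/q₂ > 1`, the slope of the segment from
`P_A = (0, δ₂q₂)` to `P_{B₁}` is strictly smaller (more negative) than the slope
of the segment from `P_{B₂}` to `P_C = (δ₁q₁, 0)`. -/
theorem stmt_8 (q1 q2 D1 D2 d1 d2 : ℝ) (hq1 : 0 < q1) (hq2 : 0 < q2)
    (hD1 : 0 < D1) (hD2 : 0 < D2) (hD1' : D1 < q1) (hD2' : D2 < q2)
    (hd1 : 0 < d1) (hd1' : d1 ≤ 1) (hd2 : 0 < d2) (hd2' : d2 ≤ 1)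
    (hq1d : D1 * d2 < q1) (hq2d : D2 * d1 < q2)
    (hPsi : 1 < D1 * d2 / q1 + D2 * d1 / q2) :
    (D1 * d2 ^ 2 * q2 / q1 - d2 * q2) / (q2 * (q1 - D1 * d2) ^ 2 / (D2 * q1) - 0)
      < (0 - q1 * (q2 - D2 * d1) ^ 2 / (D1 * q2))
          / (d1 * q1 - D2 * d1 ^ 2 * q1 / q2) := by
  have h1 : q1 * q2 < D1 * d2 * q2 + D2 * d1 * q1 := by
    rw [div_add_div _ _ (ne_of_gt hq1) (ne_of_gt hq2), lt_div_iff₀ (by positivity)] at hPsi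
    nlinarith
  have ha : 0 < q1 - D1 * d2 := by linarith
  have hb : 0 < q2 - D2 * d1 := by linarith
  have key : (q1 - D1 * d2) * (q2 - D2 * d1) < (D1 * d2) * (D2 * d1) := by nlinarith
  have hA : (0:ℝ) < q2 * (q1 - D1 * d2) ^ 2 / (D2 * q1) - 0 := by
    rw [sub_zero]; positivity
  have hB : (0:ℝ) < d1 * q1 - D2 * d1 ^ 2 * q1 / q2 := by
    rw [sub_pos, div_lt_iff₀ hq2]
    nlinarith [mul_lt_mul_of_pos_left hq2d (mul_pos hd1 hq1)]
  rw [div_lt_div_iff₀ hA hB]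
  have e1 : D1 * d2 ^ 2 * q2 / q1 - d2 * q2 = -(d2 * q2 * (q1 - D1 * d2) / q1) := by
    field_simp; ring
  have e2 : d1 * q1 - D2 * d1 ^ 2 * q1 / q2 = d1 * q1 * (q2 - D2 * d1) / q2 := by
    field_simp
  rw [e1, e2]
  rw [show (0:ℝ) - q1 * (q2 - D2 * d1) ^ 2 / (D1 * q2) = -(q1 * (q2 - D2 * d1) ^ 2 / (D1 * q2)) by ring,
      sub_zero, neg_mul, neg_mul, neg_lt_neg_iff]
  rw [div_mul_div_comm, div_mul_div_comm, div_lt_div_iff₀ (by positivity) (by positivity)]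
  nlinarith [mul_lt_mul_of_pos_right key
    (by positivity : (0:ℝ) < (q1-D1*d2)*(q2-D2*d1)*q1^2*q2^2)]
end

section
/- The function p ↦ p·f(p) where f(p) = (δ/p)(1 - (δ/p)^c)/(1 - (δ/p)^{c+1}) for p ≠ δ and f(δ) = c/(c+1), is increasing in p on (0, 1], and its maximum on (0,1] is δ(1 - δ^c)/(1 - δ^{c+1}), attained at p = 1. -/
/-- The effective transmission rate `p ↦ p f(p)`, where `f(p)` is the stationary
non-emptiness probability of the M/M/1/c battery queue with arrival rate `δ` and
service rate `p`, is increasing on `(0, 1]` and attains its maximum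
`δ(1-δ^c)/(1-δ^(c+1))` at `p = 1`. -/
theorem stmt_12 (δ : ℝ) (c : ℕ) (h0 : 0 < δ) (h1 : δ < 1) (hc : 1 ≤ c)
    (f : ℝ → ℝ)
    (hf : ∀ p : ℝ, f p = if p = δ then (c : ℝ) / (c + 1)
        else (δ / p) * (1 - (δ / p) ^ c) / (1 - (δ / p) ^ (c + 1))) :
    MonotoneOn (fun p : ℝ => p * f p) (Set.Ioc 0 1) ∧
      IsMaxOn (fun p : ℝ => p * f p) (Set.Ioc 0 1) 1 ∧
      1 * f 1 = δ * (1 - δ ^ c) / (1 - δ ^ (c + 1)) := by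
  -- abbreviations
  have hBpos : ∀ x : ℝ, 0 < x → 0 < ∑ i ∈ Finset.range (c + 1), x ^ i := by
    intro x hx
    exact Finset.sum_pos (fun i _ => pow_pos hx i) Finset.nonempty_range_add_one
  have hAnonneg : ∀ x : ℝ, 0 < x → 0 ≤ ∑ i ∈ Finset.range c, x ^ i := by
    intro x hx
    exact Finset.sum_nonneg fun i _ => (pow_pos hx i).le
  have key : ∀ x y : ℝ, 0 < y → y ≤ x →
      (∑ i ∈ Finset.range c, x ^ i) * (∑ i ∈ Finset.range (c + 1), y ^ i) ≤
      (∑ i ∈ Finset.range c, y ^ i) * (∑ i ∈ Finset.range (c + 1), x ^ i) := by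
    intro x y hy hyx
    have hx : 0 < x := hy.trans_le hyx
    have hstep : (∑ i ∈ Finset.range c, x ^ i) * y ^ c ≤
        (∑ i ∈ Finset.range c, y ^ i) * x ^ c := by
      rw [Finset.sum_mul, Finset.sum_mul]
      apply Finset.sum_le_sum
      intro i hi
      have hic : i ≤ c := (Finset.mem_range.1 hi).le
      have e1 : x ^ c = x ^ i * x ^ (c - i) := by rw [← pow_add]; congr 1; omega
      have e2 : y ^ c = y ^ i * y ^ (c - i) := by rw [← pow_add]; congr 1; omega
      rw [e1, e2]
      have h3 : y ^ (c - i) ≤ x ^ (c - i) := pow_le_pow_left₀ hy.le hyx _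
      calc x ^ i * (y ^ i * y ^ (c - i)) = (x ^ i * y ^ i) * y ^ (c - i) := by ring
        _ ≤ (x ^ i * y ^ i) * x ^ (c - i) := by
            apply mul_le_mul_of_nonneg_left h3; positivity
        _ = y ^ i * (x ^ i * x ^ (c - i)) := by ring
    rw [Finset.sum_range_succ, Finset.sum_range_succ]
    nlinarith [hstep]
  have hform : ∀ p : ℝ, 0 < p → p * f p =
      δ * (∑ i ∈ Finset.range c, (δ / p) ^ i) / (∑ i ∈ Finset.range (c + 1), (δ / p) ^ i) := by
    intro p hp
    by_cases hpδ : p = δ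
    · subst hpδ
      rw [hf, if_pos rfl, div_self hp.ne']
      simp [mul_div_assoc]
    · rw [hf, if_neg hpδ]
      have hx0 : 0 < δ / p := div_pos h0 hp
      have hx1 : δ / p ≠ 1 := by
        intro h
        exact hpδ (by field_simp at h; linarith)
      have hpx : p * (δ / p) = δ := mul_div_cancel₀ δ hp.ne'
      generalize hgx : δ / p = x at hx0 hx1 hpx ⊢
      have hxc1 : (1 : ℝ) - x ≠ 0 := sub_ne_zero.2 (Ne.symm hx1)
      have hA : 1 - x ^ c = (1 - x) * ∑ i ∈ Finset.range c, x ^ i := by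
        have h := geom_sum_mul x c; linear_combination h
      have hB : 1 - x ^ (c + 1) = (1 - x) * ∑ i ∈ Finset.range (c + 1), x ^ i := by
        have h := geom_sum_mul x (c + 1); linear_combination h
      have hBp : (0 : ℝ) < ∑ i ∈ Finset.range (c + 1), x ^ i := hBpos x hx0
      rw [hA, hB, ← hpx]
      field_simp
  have hmono : MonotoneOn (fun p : ℝ => p * f p) (Set.Ioc 0 1) := by
    intro p hp q hq hpq
    simp only
    rw [hform p hp.1, hform q hq.1]
    have hy : 0 < δ / q := div_pos h0 hq.1
    have hx : 0 < δ / p := div_pos h0 hp.1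
    have hyx : δ / q ≤ δ / p := by gcongr; exact hp.1
    rw [div_le_div_iff₀ (hBpos _ hx) (hBpos _ hy)]
    calc δ * (∑ i ∈ Finset.range c, (δ / p) ^ i) * (∑ i ∈ Finset.range (c + 1), (δ / q) ^ i)
        = δ * ((∑ i ∈ Finset.range c, (δ / p) ^ i) * (∑ i ∈ Finset.range (c + 1), (δ / q) ^ i)) := by ring
      _ ≤ δ * ((∑ i ∈ Finset.range c, (δ / q) ^ i) * (∑ i ∈ Finset.range (c + 1), (δ / p) ^ i)) :=
          mul_le_mul_of_nonneg_left (key _ _ hy hyx) h0.le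
      _ = δ * (∑ i ∈ Finset.range c, (δ / q) ^ i) * (∑ i ∈ Finset.range (c + 1), (δ / p) ^ i) := by ring
  refine ⟨hmono, ?_, ?_⟩
  · intro x hx
    exact hmono hx ⟨zero_lt_one, le_refl 1⟩ hx.2
  · rw [hf, if_neg (ne_of_gt h1)]
    simp [div_one]
end
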